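/- In the graph G'' of the TJ-to-TS construction, for every function σ : {1,…,k} → V, the set {σ(i)^i : 1 ≤ i ≤ k} ∪ {z_init} is an independent set of G'' if and only if σ is injective and {σ(1),…,σ(k)} is an independent set of G. -/
import Mathlib


/-- `I` is an independent set of the graph `G`. -/
def IsIndepFinset {α : Type*} (G : SimpleGraph α) (I : Finset α) : Prop :=
  ∀ u ∈ I, ∀ v ∈ I, ¬ G.Adj u v

/-- `D` is a dominating set of the graph `G`. -/
def IsDomFinset {α : Type*} (G : SimpleGraph α) (D : Finset α) : Prop :=
  ∀ x : α, x ∈ D ∨ ∃ y ∈ D, G.Adj x y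

/-- A token-jumping step: some token jumps from `u ∈ I` to `w ∉ I`. -/
def TJStep {α : Type*} [DecidableEq α] (I J : Finset α) : Prop :=
  ∃ u ∈ I, ∃ w, w ∉ I ∧ J = insert w (I.erase u)

/-- A token-sliding step: some token slides from `u ∈ I` along an edge to `w ∉ I`. -/
def TSStep {α : Type*} [DecidableEq α] (G : SimpleGraph α) (I J : Finset α) : Prop :=
  ∃ u ∈ I, ∃ w, w ∉ I ∧ G.Adj u w ∧ J = insert w (I.erase u)

/-- A partitioned token-jumping step with respect to token sets `Q`. -/
def PTJStep {α : Type*} {ι : Type*} [DecidableEq α] (Q : ι → Set α) (I J : Finset α) : Prop :=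
  ∃ u ∈ I, ∃ w, w ∉ I ∧ (∃ i, u ∈ Q i ∧ w ∈ Q i) ∧ J = insert w (I.erase u)

/-- A partitioned token-sliding step with respect to token sets `Q`. -/
def PTSStep {α : Type*} {ι : Type*} [DecidableEq α] (G : SimpleGraph α) (Q : ι → Set α)
    (I J : Finset α) : Prop :=
  ∃ u ∈ I, ∃ w, w ∉ I ∧ G.Adj u w ∧ (∃ i, u ∈ Q i ∧ w ∈ Q i) ∧ J = insert w (I.erase u)

/-- There is a reconfiguration sequence `A = f 0, f 1, …, f ℓ = B` of length `ℓ`, all of whose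
members satisfy `Valid`, with consecutive members related by `Step`. -/
def AdmitsSeq {α : Type*} (Valid : Finset α → Prop) (Step : Finset α → Finset α → Prop)
    (A B : Finset α) (ℓ : ℕ) : Prop :=
  ∃ f : ℕ → Finset α, f 0 = A ∧ f ℓ = B ∧ (∀ i, i ≤ ℓ → Valid (f i)) ∧
    ∀ i, i < ℓ → Step (f i) (f (i + 1))

/-- Vertices of the graph `G''` of the TJ-to-TS construction. -/
inductive GVzero (V : Type*) (k : ℕ) : Type _ where
  | copy : V → Fin k → GVzero V k
  | fv : Fin k → GVzero V k
  | zinit : GVzero V k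
  | zfin : GVzero V k
deriving DecidableEq

/-- The edges of `G''`. -/
def relZero {V : Type*} {k : ℕ} (G : SimpleGraph V) (Ifin : Finset V) :
    GVzero V k → GVzero V k → Prop
  | .copy v i, .copy w j => i = j ∨ (i ≠ j ∧ (G.Adj v w ∨ v = w))
  | .fv i, .copy _ j => i = j
  | .fv _, .zinit => True
  | .zinit, .zfin => True
  | .zfin, .copy v _ => v ∉ Ifin
  | _, _ => False

/-- The graph `G''` of the TJ-to-TS construction. -/
def GppZero {V : Type*} (k : ℕ) (G : SimpleGraph V) (Ifin : Finset V) :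
    SimpleGraph (GVzero V k) :=
  SimpleGraph.fromRel (relZero G Ifin)

/-- for every `σ : {1,…,k} → V`, the set `{σ(i)^i : 1 ≤ i ≤ k} ∪ {z_init}` is an
independent set of `G''` iff `σ` is injective and `{σ(1),…,σ(k)}` is an independent set
of `G`. -/
theorem stmt9 {V : Type*} [Fintype V] [DecidableEq V] (G : SimpleGraph V) (k : ℕ)
    (Iinit Ifin : Finset V)
    (hIinit : IsIndepFinset G Iinit) (hIfin : IsIndepFinset G Ifin)
    (hci : Iinit.card = k) (hcf : Ifin.card = k)
    (σ : Fin k → V) :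
    IsIndepFinset (GppZero k G Ifin)
      (insert GVzero.zinit (Finset.univ.image fun i => GVzero.copy (σ i) i)) ↔
    Function.Injective σ ∧ IsIndepFinset G (Finset.univ.image σ) := by
  constructor
  · intro h
    have hinj : Function.Injective σ := by
      intro i j hij
      by_contra hne
      exact h _ (Finset.mem_insert_of_mem (Finset.mem_image_of_mem _ (Finset.mem_univ i)))
        _ (Finset.mem_insert_of_mem (Finset.mem_image_of_mem _ (Finset.mem_univ j)))
        (by simp [GppZero, SimpleGraph.fromRel_adj, relZero, hne, hij])
    refine ⟨hinj, ?_⟩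
    intro u hu v hv huv
    obtain ⟨i, -, rfl⟩ := Finset.mem_image.mp hu
    obtain ⟨j, -, rfl⟩ := Finset.mem_image.mp hv
    have hij : i ≠ j := by rintro rfl; exact G.irrefl huv
    refine h _ (Finset.mem_insert_of_mem (Finset.mem_image_of_mem _ (Finset.mem_univ i)))
      _ (Finset.mem_insert_of_mem (Finset.mem_image_of_mem _ (Finset.mem_univ j))) ?_
    simp only [GppZero, SimpleGraph.fromRel_adj, relZero]
    exact ⟨by simp [hij], Or.inl (Or.inr ⟨hij, Or.inl huv⟩)⟩
  · rintro ⟨hinj, hind⟩ u hu v hv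
    simp only [Finset.mem_insert, Finset.mem_image] at hu hv
    rcases hu with rfl | ⟨i, -, rfl⟩ <;> rcases hv with rfl | ⟨j, -, rfl⟩ <;>
      simp only [GppZero, SimpleGraph.fromRel_adj, relZero] <;>
      rintro ⟨hne, hrel⟩
    · exact hne rfl
    · tauto
    · tauto
    · rcases eq_or_ne i j with rfl | hij
      · exact hne rfl
      · have h1 : σ i ≠ σ j := fun h => hij (hinj h)
        have h2 : ¬ G.Adj (σ i) (σ j) := hind _ (Finset.mem_image_of_mem _ (Finset.mem_univ i))
          _ (Finset.mem_image_of_mem _ (Finset.mem_univ j))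
        have h3 : ¬ G.Adj (σ j) (σ i) := fun h => h2 h.symm
        rcases hrel with (rfl | ⟨-, h | h⟩) | (rfl | ⟨-, h | h⟩) <;>
          first | exact hij rfl | exact h2 h | exact h3 h | exact h1 h | exact h1 h.symm
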